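/- arXiv:1602.08468 — 4 statements merged into one kernel-verified Lean document; each statement's English description precedes it below -/
import Mathlib

section
/- Let G be a connected Lie group and (φ_t) a flow of automorphisms on G that is contracting, i.e., there exist constants c, μ > 0 such that ‖(dφ_t)_e X‖ ≤ c·e^{-μt}‖X‖ for all X in the Lie algebra 𝔤 and t ≥ 0. Then G is simply connected. -/
/-!
Pick `t₀` with `c e^{-μ t₀} < 1`. In a chart at `1`, the automorphism `φ t₀` is then a
contraction near its fixed point `1`, so its iterates carry a neighbourhood `V` of `1` uniformly
into any neighbourhood of `1`; by compactness of `[0, t₀]` the same holds for `φ t` as `t → ∞`.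
The points `g` with `φ t g → 1` form a subgroup containing `V`, hence all of `G`, and translating
by `g` upgrades this to `φ t → 1` locally uniformly on `G`. Thus
`(s, g) ↦ φ (s / (1 - s)) g`, extended by `1` at `s = 1`, contracts `G` to `1`.
-/

open Set Filter Topology Manifold
open scoped NNReal

section AttractingFixedPoint

variable {E H M : Type*} [NormedAddCommGroup E] [NormedSpace ℝ E] [TopologicalSpace H]
  {I : ModelWithCorners ℝ E H} [TopologicalSpace M] [ChartedSpace H M]
  {f : M → M} {x : M}

theorem exists_pos_forall_mem_of_mem_nhds_extChartAt {U : Set M} (hU : U ∈ 𝓝 x) :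
    ∃ δ > 0, ∀ z ∈ (extChartAt I x).source,
      dist (extChartAt I x z) (extChartAt I x x) < δ → z ∈ U := by
  have hU' : (extChartAt I x).symm ⁻¹' U ∈ 𝓝 (extChartAt I x x) :=
    (continuousAt_extChartAt_symm x).preimage_mem_nhds (by rwa [extChartAt_to_inv])
  obtain ⟨δ, hδ, hδU⟩ := Metric.mem_nhds_iff.1 hU'
  refine ⟨δ, hδ, fun z hz hzδ => ?_⟩
  simpa only [mem_preimage, (extChartAt I x).left_inv hz] using hδU hzδ

theorem exists_mem_nhds_eventually_mapsTo_iterate_of_lipschitzOnWith [I.Boundaryless]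
    (hfc : ContinuousAt f x) (hfx : f x = x) {K : ℝ≥0} (hK : K < 1) {s : Set E}
    (hs : s ∈ 𝓝 (extChartAt I x x))
    (hlip : LipschitzOnWith K (writtenInExtChartAt I I x f) s) :
    ∃ V ∈ 𝓝 x, ∀ U ∈ 𝓝 x, ∀ᶠ n in atTop, MapsTo f^[n] V U := by
  set e := extChartAt I x
  set y₀ := e x
  have he : e.symm y₀ = x := extChartAt_to_inv x
  have hD : e.target ∩ e.symm ⁻¹' (f ⁻¹' e.source) ∈ 𝓝 y₀ := by
    refine inter_mem (extChartAt_target_mem_nhds x) ?_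
    refine (hfc.comp_of_eq (continuousAt_extChartAt_symm x) he).preimage_mem_nhds ?_
    rw [Function.comp_apply, he, hfx]
    exact extChartAt_source_mem_nhds x
  have hΦ : ∀ y, writtenInExtChartAt I I x f y = e (f (e.symm y)) := fun y => by
    simp only [writtenInExtChartAt, Function.comp_apply, hfx, e]
  obtain ⟨ε, hε, hball⟩ := Metric.mem_nhds_iff.1 (inter_mem hs hD)
  have hstep : ∀ w ∈ e.source, dist (e w) y₀ < ε →
      f w ∈ e.source ∧ dist (e (f w)) y₀ ≤ K * dist (e w) y₀ := by
    intro w hw hwε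
    obtain ⟨hws, -, hwf⟩ := hball hwε
    rw [mem_preimage, mem_preimage, e.left_inv hw] at hwf
    refine ⟨hwf, ?_⟩
    have hy₀ : y₀ ∈ s := (hball (Metric.mem_ball_self hε)).1
    have := hlip.dist_le_mul (e w) hws y₀ hy₀
    rwa [hΦ, hΦ, e.left_inv hw, he, hfx] at this
  have hiter : ∀ z ∈ e.source, dist (e z) y₀ < ε → ∀ n : ℕ,
      f^[n] z ∈ e.source ∧ dist (e (f^[n] z)) y₀ ≤ K ^ n * dist (e z) y₀ := by
    intro z hz hzε n
    induction n with
    | zero => simpa using hz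
    | succ n ih =>
      have hlt : dist (e (f^[n] z)) y₀ < ε :=
        ih.2.trans_lt <| (mul_le_of_le_one_left dist_nonneg (pow_le_one₀ K.2 hK.le)).trans_lt hzε
      obtain ⟨hsrc, hdist⟩ := hstep _ ih.1 hlt
      rw [Function.iterate_succ_apply']
      refine ⟨hsrc, hdist.trans ?_⟩
      rw [pow_succ', mul_assoc]
      exact mul_le_mul_of_nonneg_left ih.2 K.2
  refine ⟨e.source ∩ e ⁻¹' Metric.ball y₀ ε, inter_mem (extChartAt_source_mem_nhds x)
    ((continuousAt_extChartAt x).preimage_mem_nhds (Metric.ball_mem_nhds y₀ hε)), ?_⟩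
  intro U hU
  obtain ⟨δ, hδ, hδU⟩ := exists_pos_forall_mem_of_mem_nhds_extChartAt (I := I) hU
  have hsmall : ∀ᶠ n in atTop, (K : ℝ) ^ n * ε < δ := by
    simpa using ((tendsto_pow_atTop_nhds_zero_of_lt_one K.2 hK).mul_const ε).eventually
      (gt_mem_nhds (by simpa using hδ))
  filter_upwards [hsmall] with n hn z ⟨hz, hzε⟩
  obtain ⟨hsrc, hdist⟩ := hiter z hz hzε n
  exact hδU _ hsrc <|
    hdist.trans_lt <| (mul_le_mul_of_nonneg_left hzε.le (by positivity)).trans_lt hn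

theorem exists_mem_nhds_eventually_mapsTo_iterate_of_norm_mfderiv_lt_one [I.Boundaryless]
    (hf : ContMDiffAt I I 1 f x) (hfx : f x = x)
    (hdf : ‖(show E →L[ℝ] E from mfderiv I I f x)‖ < 1) :
    ∃ V ∈ 𝓝 x, ∀ U ∈ 𝓝 x, ∀ᶠ n in atTop, MapsTo f^[n] V U := by
  have hcd : ContDiffAt ℝ 1 (writtenInExtChartAt I I x f) (extChartAt I x x) := by
    simpa [I.range_eq_univ, contDiffWithinAt_univ] using (contMDiffAt_iff.1 hf).2
  have hfd : fderiv ℝ (writtenInExtChartAt I I x f) (extChartAt I x x) = mfderiv I I f x := by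
    rw [(hf.mdifferentiableAt one_ne_zero).mfderiv, I.range_eq_univ, fderivWithin_univ]
  obtain ⟨K, hdfK, hK⟩ := exists_between (show ‖fderiv ℝ _ _‖₊ < 1 by rw [hfd]; exact hdf)
  obtain ⟨s, hs, hlip⟩ := hcd.exists_lipschitzOnWith_of_nnnorm_lt K hdfK
  exact exists_mem_nhds_eventually_mapsTo_iterate_of_lipschitzOnWith hf.continuousAt hfx hK hs hlip

end AttractingFixedPoint

theorem tendsto_div_one_sub_nhdsLT_one : Tendsto (fun s : ℝ => s / (1 - s)) (𝓝[<] 1) atTop := by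
  have hcont : Tendsto (fun s : ℝ => 1 - s) (𝓝[<] 1) (𝓝 0) := by
    have := ((continuous_sub_left (1 : ℝ)).tendsto 1).mono_left (nhdsWithin_le_nhds (s := Iio 1))
    rwa [sub_self] at this
  have hden : Tendsto (fun s : ℝ => 1 - s) (𝓝[<] 1) (𝓝[>] 0) :=
    tendsto_nhdsWithin_iff.2
      ⟨hcont, eventually_nhdsWithin_of_forall fun s (hs : s < 1) => sub_pos.2 hs⟩
  simpa [div_eq_mul_inv] using (tendsto_nhdsWithin_of_tendsto_nhds continuous_id.continuousAt
    |>.pos_mul_atTop one_pos (tendsto_inv_nhdsGT_zero.comp hden))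

namespace Flow

theorem map_nsmul {τ α : Type*} [TopologicalSpace τ] [AddMonoid τ] [TopologicalSpace α]
    (ϕ : Flow τ α) (n : ℕ) (t : τ) : ϕ (n • t) = (ϕ t)^[n] := by
  induction n with
  | zero => simp [ϕ.map_zero]
  | succ n ih => ext x; rw [succ_nsmul', ϕ.map_add, ih, Function.iterate_succ_apply']

variable {X : Type*} [TopologicalSpace X]

theorem eventually_mapsTo_of_eventually_mapsTo_iterate (ϕ : Flow ℝ X) {x₀ : X}
    (hx₀ : ∀ t, ϕ t x₀ = x₀) {T : ℝ} (hT : 0 < T) {V : Set X}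
    (hV : ∀ W ∈ 𝓝 x₀, ∀ᶠ n in atTop, MapsTo (ϕ T)^[n] V W) {U : Set X} (hU : U ∈ 𝓝 x₀) :
    ∀ᶠ t in atTop, MapsTo (ϕ t) V U := by
  have hW : ∀ᶠ x in 𝓝 x₀, ∀ r ∈ Icc 0 T, ϕ r x ∈ U :=
    isCompact_Icc.eventually_forall_of_forall_eventually fun r _ =>
      (ϕ.continuous continuous_snd continuous_fst).continuousAt.eventually_mem
        (by simpa [hx₀] using hU)
  obtain ⟨N, hN⟩ := eventually_atTop.1 (hV _ hW)
  filter_upwards [eventually_ge_atTop (N * T)] with t ht x hx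
  have ht_nonneg : 0 ≤ t := le_trans (by positivity) ht
  set n := ⌊t / T⌋₊
  have hnT : n * T ≤ t := (le_div_iff₀ hT).1 (Nat.floor_le (by positivity))
  have hTn : t < (n + 1) * T := (div_lt_iff₀ hT).1 (Nat.lt_floor_add_one _)
  have hNn : N ≤ n := Nat.le_floor ((le_div_iff₀ hT).2 ht)
  have hsplit : ϕ t x = ϕ (t - n • T) ((ϕ T)^[n] x) := by
    rw [← ϕ.map_nsmul, ← ϕ.map_add, sub_add_cancel]
  rw [hsplit, nsmul_eq_mul]
  exact hN n hNn hx _ ⟨by linarith, by linarith⟩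

theorem contractibleSpace_of_tendsto (ϕ : Flow ℝ X) (x₀ : X)
    (h : ∀ x, Tendsto (fun p : ℝ × X => ϕ p.1 p.2) (atTop ×ˢ 𝓝 x) (𝓝 x₀)) :
    ContractibleSpace X := by
  let H : unitInterval × X → X := fun p =>
    if (p.1 : ℝ) = 1 then x₀ else ϕ (p.1 / (1 - p.1)) p.2
  have hH : Continuous H := by
    refine continuous_iff_continuousAt.2 fun ⟨s, x⟩ => ?_
    by_cases hs : (s : ℝ) = 1
    · have hlt : Tendsto (fun q : unitInterval × X => (q.1 : ℝ))
          (𝓝 (s, x) ⊓ 𝓟 {q | ¬(q.1 : ℝ) = 1}) (𝓝[<] 1) :=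
        tendsto_nhdsWithin_iff.2
          ⟨hs ▸ ((continuous_subtype_val.comp continuous_fst).tendsto (s, x)).mono_left
            inf_le_left,
          eventually_inf_principal.2 <| .of_forall fun q hq => lt_of_le_of_ne q.1.2.2 hq⟩
      have hsnd : Tendsto Prod.snd (𝓝 (s, x) ⊓ 𝓟 {q : unitInterval × X | ¬(q.1 : ℝ) = 1})
          (𝓝 x) := (continuous_snd.tendsto _).mono_left inf_le_left
      simp only [ContinuousAt, H, if_pos hs]
      exact tendsto_const_nhds.if
        ((h x).comp ((tendsto_div_one_sub_nhdsLT_one.comp hlt).prodMk hsnd))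
    · have hne : ∀ᶠ q : unitInterval × X in 𝓝 (s, x), (q.1 : ℝ) ≠ 1 :=
        (continuous_subtype_val.comp continuous_fst).continuousAt.eventually_ne hs
      have hden : (1 : ℝ) - s ≠ 0 := sub_ne_zero.2 (Ne.symm hs)
      refine ContinuousAt.congr ?_ (hne.mono fun q hq => (if_neg hq).symm)
      exact ϕ.cont'.continuousAt.comp <| ContinuousAt.prodMk
        ((continuous_subtype_val.comp continuous_fst).continuousAt.div
          (continuous_const.sub (continuous_subtype_val.comp continuous_fst)).continuousAt hden)
        continuous_snd.continuousAt
  refine (contractible_iff_id_nullhomotopic X).2 ⟨x₀, ⟨⟨⟨H, hH⟩, fun x => ?_, fun x => ?_⟩⟩⟩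
  · simp [H, ϕ.map_zero_apply]
  · simp [H]

end Flow

theorem Subgroup.eq_top_of_mem_nhds {G : Type*} [Group G] [TopologicalSpace G]
    [SeparatelyContinuousMul G] [PreconnectedSpace G] (H : Subgroup G) {g : G}
    (hg : (H : Set G) ∈ 𝓝 g) : H = ⊤ := by
  have hopen := H.isOpen_of_mem_nhds hg
  exact SetLike.coe_injective <|
    (IsClopen.eq_univ ⟨H.isClosed_of_isOpen hopen, hopen⟩ ⟨g, mem_of_mem_nhds hg⟩)

section ContractionSubgroup

variable {ι G : Type*} [Group G] [TopologicalSpace G] [IsTopologicalGroup G]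

def contractionSubgroup (φ : ι → G →* G) (l : Filter ι) : Subgroup G where
  carrier := {g | Tendsto (fun i => φ i g) l (𝓝 1)}
  one_mem' := by simpa using tendsto_const_nhds
  mul_mem' {a b} ha hb := by simpa using ha.mul hb
  inv_mem' {a} ha := by simpa using ha.inv

theorem mem_contractionSubgroup {φ : ι → G →* G} {l : Filter ι} {g : G} :
    g ∈ contractionSubgroup φ l ↔ Tendsto (fun i => φ i g) l (𝓝 1) := Iff.rfl

theorem tendsto_nhds_one_of_eventually_mapsTo [ConnectedSpace G] {φ : ι → G →* G} {l : Filter ι}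
    {V : Set G} (hV : V ∈ 𝓝 1) (hφV : ∀ U ∈ 𝓝 (1 : G), ∀ᶠ i in l, MapsTo (φ i) V U) (g : G) :
    Tendsto (fun p : ι × G => φ p.1 p.2) (l ×ˢ 𝓝 g) (𝓝 1) := by
  have hone : Tendsto (fun p : ι × G => φ p.1 p.2) (l ×ˢ 𝓝 1) (𝓝 1) := fun U hU =>
    ((hφV U hU).prod_mk hV).mono fun p hp => hp.1 hp.2
  have htop : contractionSubgroup φ l = ⊤ :=
    Subgroup.eq_top_of_mem_nhds _ <| mem_of_superset hV fun x hx U hU =>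
      (hφV U hU).mono fun i hi => hi hx
  have hg : Tendsto (fun i => φ i g) l (𝓝 1) := mem_contractionSubgroup.1 (htop ▸ trivial)
  have htranslate : Tendsto (fun p : ι × G => (p.1, g⁻¹ * p.2)) (l ×ˢ 𝓝 g) (l ×ˢ 𝓝 1) :=
    tendsto_fst.prodMk <| ((continuous_const_mul g⁻¹).tendsto' g 1 (inv_mul_cancel g)).comp
      tendsto_snd
  -- `φ i x = φ i g * φ i (g⁻¹ * x)`
  simpa [← map_mul] using (hg.comp tendsto_fst).mul (hone.comp htranslate)

end ContractionSubgroup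

theorem stmt0_general
    {E : Type*} [NormedAddCommGroup E] [NormedSpace ℝ E]
    {G : Type*} [TopologicalSpace G] [ChartedSpace E G] [Group G]
    [LieGroup 𝓘(ℝ, E) (⊤ : ℕ∞) G] [ConnectedSpace G]
    (φ : ℝ → G ≃* G)
    (hsmooth : ∀ t, ContMDiff 𝓘(ℝ, E) 𝓘(ℝ, E) (⊤ : ℕ∞) (φ t))
    (hflow : ∀ s t : ℝ, ∀ g : G, φ (s + t) g = φ s (φ t g))
    (hcont_t : Continuous fun p : ℝ × G => φ p.1 p.2)
    (c μ : ℝ) (hc : 0 < c) (hμ : 0 < μ)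
    (hcontr : ∀ t : ℝ, 0 ≤ t → ∀ X : E,
      ‖(show E from mfderiv 𝓘(ℝ, E) 𝓘(ℝ, E) (φ t) 1 X)‖ ≤ c * Real.exp (-μ * t) * ‖X‖) :
    SimplyConnectedSpace G := by
  have := topologicalGroup_of_lieGroup 𝓘(ℝ, E) (⊤ : ℕ∞) (G := G)
  let ϕ : Flow ℝ G :=
    { toFun := fun t g => φ t g
      cont' := hcont_t
      map_add' := hflow
      map_zero' := fun g => (φ 0).injective (by rw [← hflow, add_zero]) }
  have hdecay : Tendsto (fun t => c * Real.exp (-μ * t)) atTop (𝓝 0) := by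
    simpa using (Real.tendsto_exp_atBot.comp
      (tendsto_id.const_mul_atTop_of_neg (neg_lt_zero.2 hμ))).const_mul c
  obtain ⟨t₀, ht₀, hct₀⟩ :=
    ((eventually_gt_atTop 0).and (hdecay.eventually (gt_mem_nhds one_pos))).exists
  have hdf : ‖(show E →L[ℝ] E from mfderiv 𝓘(ℝ, E) 𝓘(ℝ, E) (φ t₀) 1)‖ < 1 :=
    (ContinuousLinearMap.opNorm_le_bound _ (by positivity) (hcontr t₀ ht₀.le)).trans_lt hct₀
  obtain ⟨V, hV, hVφ⟩ := exists_mem_nhds_eventually_mapsTo_iterate_of_norm_mfderiv_lt_one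
    ((hsmooth t₀).contMDiffAt.of_le (by exact_mod_cast le_top)) (map_one _) hdf
  have hmaps : ∀ U ∈ 𝓝 (1 : G), ∀ᶠ t in atTop, MapsTo (φ t) V U := fun U hU =>
    ϕ.eventually_mapsTo_of_eventually_mapsTo_iterate (fun t => map_one (φ t)) ht₀ hVφ hU
  have : ContractibleSpace G := ϕ.contractibleSpace_of_tendsto 1
    (tendsto_nhds_one_of_eventually_mapsTo (φ := fun t => (φ t : G →* G)) hV hmaps)
  infer_instance

/-- A connected Lie group admitting a contracting flow of automorphisms
is simply connected. -/
theorem stmt0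
    {E : Type*} [NormedAddCommGroup E] [NormedSpace ℝ E] [FiniteDimensional ℝ E]
    {G : Type*} [TopologicalSpace G] [ChartedSpace E G] [Group G]
    [IsManifold 𝓘(ℝ, E) (⊤ : ℕ∞) G] [LieGroup 𝓘(ℝ, E) (⊤ : ℕ∞) G] [ConnectedSpace G]
    (φ : ℝ → G ≃* G)
    (hsmooth : ∀ t, ContMDiff 𝓘(ℝ, E) 𝓘(ℝ, E) (⊤ : ℕ∞) (φ t))
    (hflow : ∀ s t : ℝ, ∀ g : G, φ (s + t) g = φ s (φ t g))
    (hcont_t : Continuous fun p : ℝ × G => φ p.1 p.2)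
    (c μ : ℝ) (hc : 0 < c) (hμ : 0 < μ)
    (hcontr : ∀ t : ℝ, 0 ≤ t → ∀ X : E,
      ‖(show E from mfderiv 𝓘(ℝ, E) 𝓘(ℝ, E) (φ t) 1 X)‖ ≤ c * Real.exp (-μ * t) * ‖X‖) :
    SimplyConnectedSpace G :=
  stmt0_general φ hsmooth hflow hcont_t c μ hc hμ hcontr
end

section
/- Let G be a topological group and H₁, H₂ closed subgroups with G = H₁H₂ and H₁ ∩ H₂ = {e}, and suppose that for every pair of neighborhoods U₁ of e in H₁ and U₂ of e in H₂ there exist neighborhoods V₁ ⊆ U₁, V₂ ⊆ U₂ such that V₁V₂ is open in G. If (x_n) is a sequence in G with unique decompositions x_n = h_{1,n}h_{2,n} (h_{i,n} ∈ H_i), then x_n → x if and only if h_{1,n} → h₁ and h_{2,n} → h₂, where x = h₁h₂ is the unique decomposition of x. -/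
/-!
The product map `μ : H₁ × H₂ → G, (h₁, h₂) ↦ h₁ h₂` is continuous and, by uniqueness of the
decomposition, injective. The hypothesis on products of small neighbourhoods says that `μ` maps
neighbourhoods of `(1, 1)` to neighbourhoods of `1`; since `μ (a u₁, u₂ b) = a μ (u₁, u₂) b`,
translating shows that `μ` is an open map. Hence `μ` is an open embedding, so a sequence converges
in `G` exactly when its preimage converges in `H₁ × H₂`, i.e. componentwise.
-/

open Topology Filter

namespace Subgroup

variable {G : Type*} [Group G] [TopologicalSpace G] {H₁ H₂ : Subgroup G}

def prodMul (H₁ H₂ : Subgroup G) : H₁ × H₂ → G := fun q => (q.1 : G) * (q.2 : G)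

theorem continuous_prodMul [ContinuousMul G] : Continuous (prodMul H₁ H₂) := by
  unfold prodMul; fun_prop

theorem prodMul_image_prod_mem_nhds_one
    (hopen : ∀ U₁ ∈ 𝓝 (1 : H₁), ∀ U₂ ∈ 𝓝 (1 : H₂),
      ∃ V₁ ∈ 𝓝 (1 : H₁), ∃ V₂ ∈ 𝓝 (1 : H₂), V₁ ⊆ U₁ ∧ V₂ ⊆ U₂ ∧
        IsOpen (prodMul H₁ H₂ '' (V₁ ×ˢ V₂))) :
    ∀ U₁ ∈ 𝓝 (1 : H₁), ∀ U₂ ∈ 𝓝 (1 : H₂), prodMul H₁ H₂ '' (U₁ ×ˢ U₂) ∈ 𝓝 1 := by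
  intro U₁ hU₁ U₂ hU₂
  obtain ⟨V₁, hV₁, V₂, hV₂, hV₁U₁, hV₂U₂, hVopen⟩ := hopen U₁ hU₁ U₂ hU₂
  have hone : (1 : G) ∈ prodMul H₁ H₂ '' (V₁ ×ˢ V₂) :=
    ⟨(1, 1), ⟨mem_of_mem_nhds hV₁, mem_of_mem_nhds hV₂⟩, by simp [prodMul]⟩
  exact mem_of_superset (hVopen.mem_nhds hone) (Set.image_mono (Set.prod_mono hV₁U₁ hV₂U₂))

theorem isOpenMap_prodMul [IsTopologicalGroup G]
    (hnhds : ∀ U₁ ∈ 𝓝 (1 : H₁), ∀ U₂ ∈ 𝓝 (1 : H₂), prodMul H₁ H₂ '' (U₁ ×ˢ U₂) ∈ 𝓝 1) :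
    IsOpenMap (prodMul H₁ H₂) := by
  refine isOpenMap_iff_nhds_le.2 fun ⟨a, b⟩ W hW => ?_
  obtain ⟨W₁, hW₁, W₂, hW₂, hW⟩ := mem_nhds_prod_iff.1 hW
  have hU₁ : (a * ·) ⁻¹' W₁ ∈ 𝓝 (1 : H₁) :=
    (continuous_const_mul a).continuousAt.preimage_mem_nhds (by simpa using hW₁)
  have hU₂ : (· * b) ⁻¹' W₂ ∈ 𝓝 (1 : H₂) :=
    (continuous_mul_const b).continuousAt.preimage_mem_nhds (by simpa using hW₂)
  have hcenter : Tendsto (fun g : G => (a : G)⁻¹ * g * (b : G)⁻¹) (𝓝 (a * b)) (𝓝 1) := by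
    have hcont : Continuous (fun g : G => (a : G)⁻¹ * g * (b : G)⁻¹) := by fun_prop
    simpa [mul_assoc] using hcont.tendsto ((a : G) * b)
  refine mem_of_superset (hcenter (hnhds _ hU₁ _ hU₂)) ?_
  rintro g ⟨⟨u₁, u₂⟩, ⟨hu₁, hu₂⟩, hu⟩
  have hg : prodMul H₁ H₂ (a * u₁, u₂ * b) = g := by
    simp only [prodMul, coe_mul] at hu ⊢
    rw [mul_assoc, ← mul_assoc (u₁ : G), hu]
    group
  exact hg ▸ hW ⟨hu₁, hu₂⟩

theorem isOpenEmbedding_prodMul [IsTopologicalGroup G] (hinj : Function.Injective (prodMul H₁ H₂))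
    (hnhds : ∀ U₁ ∈ 𝓝 (1 : H₁), ∀ U₂ ∈ 𝓝 (1 : H₂), prodMul H₁ H₂ '' (U₁ ×ˢ U₂) ∈ 𝓝 1) :
    IsOpenEmbedding (prodMul H₁ H₂) :=
  .of_continuous_injective_isOpenMap continuous_prodMul hinj (isOpenMap_prodMul hnhds)

end Subgroup

theorem stmt2_general
    {G : Type*} [Group G] [TopologicalSpace G] [IsTopologicalGroup G]
    (H₁ H₂ : Subgroup G)
    (hdec : ∀ g : G, ∃! p : H₁ × H₂, (p.1 : G) * (p.2 : G) = g)
    (hopen : ∀ U₁ ∈ nhds (1 : H₁), ∀ U₂ ∈ nhds (1 : H₂),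
      ∃ V₁ ∈ nhds (1 : H₁), ∃ V₂ ∈ nhds (1 : H₂), V₁ ⊆ U₁ ∧ V₂ ⊆ U₂ ∧
        IsOpen ((fun p : H₁ × H₂ => (p.1 : G) * (p.2 : G)) '' (V₁ ×ˢ V₂)))
    (x : ℕ → G) (h : ℕ → H₁ × H₂) (hx : ∀ n, ((h n).1 : G) * ((h n).2 : G) = x n)
    (l : G) (p : H₁ × H₂) (hl : (p.1 : G) * (p.2 : G) = l) :
    Filter.Tendsto x Filter.atTop (nhds l) ↔
      Filter.Tendsto (fun n => (h n).1) Filter.atTop (nhds p.1) ∧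
      Filter.Tendsto (fun n => (h n).2) Filter.atTop (nhds p.2) := by
  have hinj : Function.Injective (Subgroup.prodMul H₁ H₂) :=
    fun q q' hqq' => (hdec _).unique rfl hqq'.symm
  have hx' : Subgroup.prodMul H₁ H₂ ∘ h = x := funext hx
  have hemb :=
    Subgroup.isOpenEmbedding_prodMul hinj (Subgroup.prodMul_image_prod_mem_nhds_one hopen)
  rw [← Prod.tendsto_iff, hemb.isInducing.tendsto_nhds_iff, hx', ← hl]
  rfl

/-- convergence in a topological group with a unique product decomposition
by two closed subgroups is equivalent to convergence of the components. -/
theorem stmt2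
    {G : Type*} [Group G] [TopologicalSpace G] [IsTopologicalGroup G]
    (H₁ H₂ : Subgroup G) (h₁c : IsClosed (H₁ : Set G)) (h₂c : IsClosed (H₂ : Set G))
    (hdec : ∀ g : G, ∃! p : H₁ × H₂, (p.1 : G) * (p.2 : G) = g)
    (hopen : ∀ U₁ ∈ nhds (1 : H₁), ∀ U₂ ∈ nhds (1 : H₂),
      ∃ V₁ ∈ nhds (1 : H₁), ∃ V₂ ∈ nhds (1 : H₂), V₁ ⊆ U₁ ∧ V₂ ⊆ U₂ ∧
        IsOpen ((fun p : H₁ × H₂ => (p.1 : G) * (p.2 : G)) '' (V₁ ×ˢ V₂)))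
    (x : ℕ → G) (h : ℕ → H₁ × H₂) (hx : ∀ n, ((h n).1 : G) * ((h n).2 : G) = x n)
    (l : G) (p : H₁ × H₂) (hl : (p.1 : G) * (p.2 : G) = l) :
    Filter.Tendsto x Filter.atTop (nhds l) ↔
      Filter.Tendsto (fun n => (h n).1) Filter.atTop (nhds p.1) ∧
      Filter.Tendsto (fun n => (h n).2) Filter.atTop (nhds p.2) :=
  stmt2_general H₁ H₂ hdec hopen x h hx l p hl
end

section
/- Let G be a connected nilpotent Lie group with a hyperbolic flow of automorphisms (φ_t) (the associated derivation D has no purely imaginary eigenvalues), with stable subgroup G⁻ and unstable subgroup G⁺ satisfying G = G⁻G⁺ and G⁺ ∩ G⁻ = {e}. Then for g ∈ G: lim_{t→∞} φ_t(g) = e if and only if g ∈ G⁻. -/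
/-!
Points of `G⁻` are contracted to `e` exponentially fast. Conversely, write `g = m p` with
`m ∈ G⁻`, `p ∈ G⁺`; if `φ_t g → e` then also `φ_t p = (φ_t m)⁻¹ φ_t g → e`, while the expansion
estimate keeps `d(φ_t p, e) ≥ c d(p, e)`, so `p = e`.
-/

open Filter Topology Real

lemma tendsto_of_dist_le_mul_exp_neg {X : Type*} [PseudoMetricSpace X] {f : ℝ → X} {x : X}
    {C μ : ℝ} (hμ : 0 < μ) (h : ∀ t, 0 ≤ t → dist (f t) x ≤ C * exp (-μ * t)) :
    Tendsto f atTop (𝓝 x) := by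
  rw [tendsto_iff_dist_tendsto_zero]
  have hexp : Tendsto (fun t => C * exp (-μ * t)) atTop (𝓝 0) := by
    simpa using (tendsto_exp_neg_atTop_nhds_zero.comp
      (tendsto_id.const_mul_atTop hμ)).const_mul C
  refine squeeze_zero' (Eventually.of_forall fun t => dist_nonneg) ?_ hexp
  filter_upwards [eventually_ge_atTop 0] with t ht using h t ht

lemma dist_eq_zero_of_tendsto_of_mul_dist_le {X : Type*} [PseudoMetricSpace X] {f : ℝ → X}
    {x y : X} {c : ℝ} (hc : 0 < c) (hf : Tendsto f atTop (𝓝 x))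
    (h : ∀ᶠ t in atTop, c * dist y x ≤ dist (f t) x) : dist y x = 0 := by
  have hle : c * dist y x ≤ 0 := ge_of_tendsto (tendsto_iff_dist_tendsto_zero.1 hf) h
  exact le_antisymm (nonpos_of_mul_nonpos_right hle hc) dist_nonneg

section Flow

variable {G : Type*} [Group G] [MetricSpace G] (φ : ℝ → G ≃* G) {c μ : ℝ}

lemma tendsto_flow_one_of_contracting {S : Subgroup G} (hμ : 0 < μ)
    (hcontr : ∀ t : ℝ, 0 ≤ t → ∀ g ∈ S, ∀ h ∈ S,
      dist (φ t g) (φ t h) ≤ c⁻¹ * exp (-μ * t) * dist g h)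
    {g : G} (hg : g ∈ S) : Tendsto (fun t => φ t g) atTop (𝓝 1) := by
  refine tendsto_of_dist_le_mul_exp_neg (C := c⁻¹ * dist g 1) hμ fun t ht => ?_
  simpa [mul_right_comm] using hcontr t ht g hg 1 S.one_mem

lemma eq_one_of_tendsto_flow_of_expanding {S : Subgroup G} (hc : 0 < c) (hμ : 0 < μ)
    (hexp : ∀ t : ℝ, 0 ≤ t → ∀ g ∈ S, ∀ h ∈ S,
      c * exp (μ * t) * dist g h ≤ dist (φ t g) (φ t h))
    {p : G} (hp : p ∈ S) (hlim : Tendsto (fun t => φ t p) atTop (𝓝 1)) : p = 1 := by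
  refine dist_eq_zero.1 (dist_eq_zero_of_tendsto_of_mul_dist_le hc hlim ?_)
  filter_upwards [eventually_ge_atTop 0] with t ht
  have hgrowth : c * dist p 1 ≤ c * exp (μ * t) * dist p 1 := by
    rw [mul_right_comm]
    exact le_mul_of_one_le_right (by positivity) (one_le_exp (by positivity))
  simpa using hgrowth.trans (hexp t ht p hp 1 S.one_mem)

end Flow

theorem stmt11_general
    {G : Type*} [Group G] [MetricSpace G] [IsTopologicalGroup G]
    (φ : ℝ → G ≃* G)
    (Gm Gp : Subgroup G)
    (hdec : ∀ g : G, ∃! p : Gm × Gp, (p.1 : G) * (p.2 : G) = g)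
    (c μ : ℝ) (hc : 0 < c) (hμ : 0 < μ)
    (hcontr : ∀ t : ℝ, 0 ≤ t → ∀ g ∈ Gm, ∀ h ∈ Gm,
      dist (φ t g) (φ t h) ≤ c⁻¹ * Real.exp (-μ * t) * dist g h)
    (hexp : ∀ t : ℝ, 0 ≤ t → ∀ g ∈ Gp, ∀ h ∈ Gp,
      c * Real.exp (μ * t) * dist g h ≤ dist (φ t g) (φ t h))
    (g : G) :
    Filter.Tendsto (fun t : ℝ => φ t g) Filter.atTop (nhds 1) ↔ g ∈ Gm := by
  refine ⟨fun hg => ?_, tendsto_flow_one_of_contracting φ hμ hcontr⟩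
  obtain ⟨⟨m, p⟩, rfl, -⟩ := hdec g
  have hm := tendsto_flow_one_of_contracting φ hμ hcontr m.2
  have hp : Tendsto (fun t => φ t p) atTop (𝓝 1) := by
    simpa using hm.inv.mul hg
  rw [eq_one_of_tendsto_flow_of_expanding φ hc hμ hexp p.2 hp, mul_one]
  exact m.2

/-- for a hyperbolic flow of automorphisms on a connected nilpotent Lie group
(with left-invariant distance, stable subgroup `Gm`, unstable subgroup `Gp`, the unique
product decomposition `G = G⁻G⁺` and the contraction/expansion estimates), an element
converges to the identity under the flow iff it lies in the stable subgroup. -/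
theorem stmt11
    {G : Type*} [Group G] [MetricSpace G] [IsTopologicalGroup G] [ConnectedSpace G]
    [Group.IsNilpotent G]
    (hinv : ∀ a g h : G, dist (a * g) (a * h) = dist g h)
    (φ : ℝ → G ≃* G)
    (hflow : ∀ s t : ℝ, ∀ g : G, φ (s + t) g = φ s (φ t g))
    (hφcont : ∀ t, Continuous (φ t))
    (Gm Gp : Subgroup G)
    (hGmc : IsClosed (Gm : Set G)) (hGpc : IsClosed (Gp : Set G))
    (hinvm : ∀ t : ℝ, ∀ g ∈ Gm, φ t g ∈ Gm) (hinvp : ∀ t : ℝ, ∀ g ∈ Gp, φ t g ∈ Gp)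
    (hdec : ∀ g : G, ∃! p : Gm × Gp, (p.1 : G) * (p.2 : G) = g)
    (c μ : ℝ) (hc : 0 < c) (hμ : 0 < μ)
    (hcontr : ∀ t : ℝ, 0 ≤ t → ∀ g ∈ Gm, ∀ h ∈ Gm,
      dist (φ t g) (φ t h) ≤ c⁻¹ * Real.exp (-μ * t) * dist g h)
    (hexp : ∀ t : ℝ, 0 ≤ t → ∀ g ∈ Gp, ∀ h ∈ Gp,
      c * Real.exp (μ * t) * dist g h ≤ dist (φ t g) (φ t h))
    (g : G) :
    Filter.Tendsto (fun t : ℝ => φ t g) Filter.atTop (nhds 1) ↔ g ∈ Gm :=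
  stmt11_general φ Gm Gp hdec c μ hc hμ hcontr hexp g
end

section
/- For a flow of automorphisms (φ_t) on a connected Lie group G with left-invariant Riemannian metric, the Lyapunov exponent λ(g, v) = limsup_{t→∞} (1/t) log ‖(dφ_t)_g(v)‖ satisfies λ(g, v) = λ(e, (dL_{g⁻¹})_g(v)) for all g ∈ G and v ∈ T_gG; in particular, Lyapunov exponents are determined by the linear flow e^{tD} on the Lie algebra. -/
open Manifold

/-!
Since `φ t` is a homomorphism, `L_{(φ t g)⁻¹} ∘ φ t = φ t ∘ L_{g⁻¹}`. Differentiating at `g`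
turns the left-invariant norm of `(dφ_t)_g v` into the norm at `e` of `(dφ_t)_e (dL_{g⁻¹})_g v`
for every `t`, and at `e` the left-invariant norm is the norm of the Lie algebra, on which
`(dφ_t)_e = e^{tD}`.
-/

section LeftTranslation

variable {𝕜 : Type*} [NontriviallyNormedField 𝕜]
  {E : Type*} [NormedAddCommGroup E] [NormedSpace 𝕜 E] {H : Type*} [TopologicalSpace H]
  {I : ModelWithCorners 𝕜 E H} {G : Type*} [Group G] [TopologicalSpace G] [ChartedSpace H G]
  {E' : Type*} [NormedAddCommGroup E'] [NormedSpace 𝕜 E'] {H' : Type*} [TopologicalSpace H']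
  {I' : ModelWithCorners 𝕜 E' H'} {K : Type*} [Group K] [TopologicalSpace K] [ChartedSpace H' K]

theorem mfderiv_one_inv_mul_apply {x : G} (v : TangentSpace I x) :
    mfderiv I I (fun y : G => (1 : G)⁻¹ * y) x v = v := by
  have hid : (fun y : G => (1 : G)⁻¹ * y) = id := by funext y; simp
  rw [hid, mfderiv_id]
  rfl

theorem mfderiv_inv_map_mul_comp_map_apply [ContMDiffMul I 1 G] [ContMDiffMul I' 1 K]
    {F : Type*} [FunLike F G K] [MonoidHomClass F G K] (f : F) {g : G}
    (hfg : MDifferentiableAt I I' f g) (hf1 : MDifferentiableAt I I' f 1) (v : TangentSpace I g) :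
    mfderiv I' I' (fun y : K => (f g)⁻¹ * y) (f g) (mfderiv I I' f g v)
      = mfderiv I I' f 1 (mfderiv I I (fun y : G => g⁻¹ * y) g v) := by
  have hcomm : (fun y : K => (f g)⁻¹ * y) ∘ f = f ∘ (fun y : G => g⁻¹ * y) := by
    funext y; simp [map_mul, map_inv]
  have hchain : mfderiv I I' (f ∘ fun y : G => g⁻¹ * y) g
      = (mfderiv I I' f 1).comp (mfderiv I I (fun y : G => g⁻¹ * y) g) := by
    have h := mfderiv_comp g (by rwa [inv_mul_cancel]) (mdifferentiableAt_mul_left (a := g⁻¹))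
    rwa [inv_mul_cancel] at h
  rw [← mfderiv_comp_apply g mdifferentiableAt_mul_left hfg, hcomm, hchain]
  rfl

end LeftTranslation

theorem stmt17_general
    {E : Type*} [NormedAddCommGroup E] [NormedSpace ℝ E]
    {G : Type*} [TopologicalSpace G] [ChartedSpace E G] [Group G]
    [LieGroup 𝓘(ℝ, E) (⊤ : ℕ∞) G]
    (φ : ℝ → G ≃* G)
    (hsmooth : ∀ t, ContMDiff 𝓘(ℝ, E) 𝓘(ℝ, E) (⊤ : ℕ∞) (φ t))
    (D : E →L[ℝ] E)
    (hD : ∀ (t : ℝ) (X : E),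
      (show E from mfderiv 𝓘(ℝ, E) 𝓘(ℝ, E) (φ t) 1 (show TangentSpace 𝓘(ℝ, E) (1 : G) from X))
        = NormedSpace.exp (t • D) X)
    -- the norm of a tangent vector `w` at `x` in the left-invariant metric:
    (nrm : (x : G) → E → ℝ)
    (hnrm : ∀ (x : G) (w : E), nrm x w =
      ‖(show E from mfderiv 𝓘(ℝ, E) 𝓘(ℝ, E) (fun y => x⁻¹ * y) x
          (show TangentSpace 𝓘(ℝ, E) x from w))‖)
    (g : G) (v : E) :
    Filter.limsup (fun t : ℝ => t⁻¹ * Real.log (nrm (φ t g)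
        (show E from mfderiv 𝓘(ℝ, E) 𝓘(ℝ, E) (φ t) g (show TangentSpace 𝓘(ℝ, E) g from v))))
        Filter.atTop
      = Filter.limsup (fun t : ℝ => t⁻¹ * Real.log (nrm (1 : G)
          (show E from mfderiv 𝓘(ℝ, E) 𝓘(ℝ, E) (φ t) 1
            (show TangentSpace 𝓘(ℝ, E) (1 : G) from
              (show E from mfderiv 𝓘(ℝ, E) 𝓘(ℝ, E) (fun y => g⁻¹ * y) g
                (show TangentSpace 𝓘(ℝ, E) g from v)))))) Filter.atTop ∧
    ∀ X : E,
      Filter.limsup (fun t : ℝ => t⁻¹ * Real.log (nrm (1 : G)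
          (show E from mfderiv 𝓘(ℝ, E) 𝓘(ℝ, E) (φ t) 1
            (show TangentSpace 𝓘(ℝ, E) (1 : G) from X)))) Filter.atTop
        = Filter.limsup
            (fun t : ℝ => t⁻¹ * Real.log ‖NormedSpace.exp (t • D) X‖) Filter.atTop := by
  have hφ : ∀ t x, MDifferentiableAt 𝓘(ℝ, E) 𝓘(ℝ, E) (φ t) x :=
    fun t x => (hsmooth t).mdifferentiableAt (by simp)
  have hnrm_one : ∀ w : E, nrm 1 w = ‖w‖ := fun w => by
    rw [hnrm, mfderiv_one_inv_mul_apply]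
  refine ⟨?_, fun X => ?_⟩
  · congr! 4 with t
    rw [hnrm, hnrm_one, mfderiv_inv_map_mul_comp_map_apply (φ t) (hφ t g) (hφ t 1)]
  · congr! 4 with t
    rw [hnrm_one, hD]

/-- for a flow of automorphisms on a Lie group with left-invariant metric,
the Lyapunov exponent satisfies `λ(g, v) = λ(e, (dL_{g⁻¹})_g v)`; in particular the
Lyapunov exponents are determined by the linear flow `e^{tD}` on the Lie algebra. -/
theorem stmt17
    {E : Type*} [NormedAddCommGroup E] [NormedSpace ℝ E] [FiniteDimensional ℝ E]
    {G : Type*} [TopologicalSpace G] [ChartedSpace E G] [Group G]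
    [IsManifold 𝓘(ℝ, E) (⊤ : ℕ∞) G] [LieGroup 𝓘(ℝ, E) (⊤ : ℕ∞) G] [ConnectedSpace G]
    (φ : ℝ → G ≃* G)
    (hsmooth : ∀ t, ContMDiff 𝓘(ℝ, E) 𝓘(ℝ, E) (⊤ : ℕ∞) (φ t))
    (hflow : ∀ s t : ℝ, ∀ g : G, φ (s + t) g = φ s (φ t g))
    (D : E →L[ℝ] E)
    (hD : ∀ (t : ℝ) (X : E),
      (show E from mfderiv 𝓘(ℝ, E) 𝓘(ℝ, E) (φ t) 1 (show TangentSpace 𝓘(ℝ, E) (1 : G) from X))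
        = NormedSpace.exp (t • D) X)
    -- the norm of a tangent vector `w` at `x` in the left-invariant metric:
    (nrm : (x : G) → E → ℝ)
    (hnrm : ∀ (x : G) (w : E), nrm x w =
      ‖(show E from mfderiv 𝓘(ℝ, E) 𝓘(ℝ, E) (fun y => x⁻¹ * y) x
          (show TangentSpace 𝓘(ℝ, E) x from w))‖)
    (g : G) (v : E) :
    Filter.limsup (fun t : ℝ => t⁻¹ * Real.log (nrm (φ t g)
        (show E from mfderiv 𝓘(ℝ, E) 𝓘(ℝ, E) (φ t) g (show TangentSpace 𝓘(ℝ, E) g from v))))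
        Filter.atTop
      = Filter.limsup (fun t : ℝ => t⁻¹ * Real.log (nrm (1 : G)
          (show E from mfderiv 𝓘(ℝ, E) 𝓘(ℝ, E) (φ t) 1
            (show TangentSpace 𝓘(ℝ, E) (1 : G) from
              (show E from mfderiv 𝓘(ℝ, E) 𝓘(ℝ, E) (fun y => g⁻¹ * y) g
                (show TangentSpace 𝓘(ℝ, E) g from v)))))) Filter.atTop ∧
    ∀ X : E,
      Filter.limsup (fun t : ℝ => t⁻¹ * Real.log (nrm (1 : G)
          (show E from mfderiv 𝓘(ℝ, E) 𝓘(ℝ, E) (φ t) 1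
            (show TangentSpace 𝓘(ℝ, E) (1 : G) from X)))) Filter.atTop
        = Filter.limsup
            (fun t : ℝ => t⁻¹ * Real.log ‖NormedSpace.exp (t • D) X‖) Filter.atTop :=
  stmt17_general φ hsmooth D hD nrm hnrm g v
end
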